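/- Define on D = ⌊X⁺⌋₁ ∪ ⌊X⁺⌋_{2-2}, where ⌊X⁺⌋₁ = {(⌊u⌋,1)} and ⌊X⁺⌋_{2-2} = {(⌊u⌋,2) : |u| = 2}, the operations: for letters x, x', x ⊣ x' = x' ⊣ x = (⌊xx'⌋,1) and x ⊢ x' = x' ⊢ x = (⌊xx'⌋,2); and whenever |u||v| > 1, all four products (⌊u⌋,p) ⊢ (⌊v⌋,q), (⌊v⌋,q) ⊢ (⌊u⌋,p), (⌊u⌋,p) ⊣ (⌊v⌋,q), (⌊v⌋,q) ⊣ (⌊u⌋,p) equal (⌊uv⌋,1). Then (D, ⊢, ⊣) is a commutative disemigroup (both operations commutative, both associative, satisfying the three dialgebra identities). -/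

import Mathlib

/-!
Both products have first component ⌊uv⌋, and ⌊·⌋ only depends on the multiset of letters, so
the first components are commutative and associative. The products differ only on two
letters, and a product of two elements of D already has length at least 2; hence every
product with a product as a factor is ⊣, and all five identities reduce to associativity
of ⊣.
-/

variable {X : Type*} [LinearOrder X]

/-- ⌊u⌋: the nondecreasing rearrangement of the word u. -/
def sortW (u : List X) : List X := u.insertionSort (· ≤ ·)

/-- D = ⌊X⁺⌋₁ ∪ ⌊X⁺⌋_{2-2}: sorted nonempty words with center 1, together with
sorted words of length 2 with center 2. -/
def CDSet : Set (List X × ℕ) :=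
  {p | p.1 ≠ [] ∧ List.Pairwise (· ≤ ·) p.1 ∧
    (p.2 = 1 ∨ (p.2 = 2 ∧ p.1.length = 2))}

/-- ⊢ on D: for two letters x ⊢ x' = (⌊xx'⌋, 2); otherwise (⌊uv⌋, 1). -/
def copL (a b : List X × ℕ) : List X × ℕ :=
  if a.1.length = 1 ∧ b.1.length = 1 then (sortW (a.1 ++ b.1), 2)
  else (sortW (a.1 ++ b.1), 1)

/-- ⊣ on D: always (⌊uv⌋, 1). -/
def copR (a b : List X × ℕ) : List X × ℕ := (sortW (a.1 ++ b.1), 1)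

section sortW

lemma sortW_perm (u : List X) : (sortW u).Perm u := List.perm_insertionSort _ _

lemma sortW_pairwise (u : List X) : (sortW u).Pairwise (· ≤ ·) :=
  List.pairwise_insertionSort _ _

lemma length_sortW (u : List X) : (sortW u).length = u.length :=
  List.length_insertionSort _ _

lemma sortW_ne_nil {u : List X} (hu : u ≠ []) : sortW u ≠ [] := by
  rw [← List.length_pos_iff, length_sortW]
  exact List.length_pos_iff.mpr hu

lemma sortW_eq_of_perm {u v : List X} (h : u.Perm v) : sortW u = sortW v :=
  ((sortW_perm u).trans (h.trans (sortW_perm v).symm)).eq_of_pairwise'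
    (sortW_pairwise u) (sortW_pairwise v)

lemma sortW_append_comm (u v : List X) : sortW (u ++ v) = sortW (v ++ u) :=
  sortW_eq_of_perm List.perm_append_comm

lemma sortW_sortW_append (u v : List X) : sortW (sortW u ++ v) = sortW (u ++ v) :=
  sortW_eq_of_perm ((sortW_perm u).append_right v)

lemma sortW_append_sortW (u v : List X) : sortW (u ++ sortW v) = sortW (u ++ v) :=
  sortW_eq_of_perm ((sortW_perm v).append_left u)

end sortW

section products

lemma fst_copL (a b : List X × ℕ) : (copL a b).1 = (copR a b).1 := by
  unfold copL; split_ifs <;> rfl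

lemma copL_eq_copR {a b : List X × ℕ} (h : a.1.length ≠ 1 ∨ b.1.length ≠ 1) :
    copL a b = copR a b := by
  rw [copL, if_neg (by tauto), copR]

lemma length_fst_copR (a b : List X × ℕ) :
    (copR a b).1.length = a.1.length + b.1.length := by
  rw [copR, length_sortW, List.length_append]

lemma one_lt_length_fst_copR {a b : List X × ℕ} (ha : a.1 ≠ []) (hb : b.1 ≠ []) :
    1 < (copR a b).1.length := by
  rw [length_fst_copR]
  have := List.length_pos_iff.mpr ha
  have := List.length_pos_iff.mpr hb
  omega

lemma copR_comm (a b : List X × ℕ) : copR a b = copR b a := by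
  rw [copR, copR, sortW_append_comm]

lemma copL_comm (a b : List X × ℕ) : copL a b = copL b a := by
  unfold copL
  rw [sortW_append_comm]
  simp only [and_comm]

lemma copR_assoc (a b c : List X × ℕ) : copR (copR a b) c = copR a (copR b c) := by
  simp only [copR, sortW_sortW_append, sortW_append_sortW, List.append_assoc]

lemma copR_copL_left (a b c : List X × ℕ) : copR (copL a b) c = copR (copR a b) c := by
  rw [copR, fst_copL]; rfl

lemma copR_copL_right (a b c : List X × ℕ) : copR a (copL b c) = copR a (copR b c) := by
  rw [copR, fst_copL]; rfl

lemma copL_copR_left {a b : List X × ℕ} (ha : a.1 ≠ []) (hb : b.1 ≠ []) (c : List X × ℕ) :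
    copL (copR a b) c = copR (copR a b) c :=
  copL_eq_copR (.inl (one_lt_length_fst_copR ha hb).ne')

lemma copL_copL_left {a b : List X × ℕ} (ha : a.1 ≠ []) (hb : b.1 ≠ []) (c : List X × ℕ) :
    copL (copL a b) c = copR (copR a b) c := by
  rw [copL_eq_copR (.inl (fst_copL a b ▸ (one_lt_length_fst_copR ha hb).ne')),
    copR_copL_left]

lemma copL_copR_right (a : List X × ℕ) {b c : List X × ℕ} (hb : b.1 ≠ []) (hc : c.1 ≠ []) :
    copL a (copR b c) = copR a (copR b c) :=
  copL_eq_copR (.inr (one_lt_length_fst_copR hb hc).ne')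

lemma copL_copL_right (a : List X × ℕ) {b c : List X × ℕ} (hb : b.1 ≠ []) (hc : c.1 ≠ []) :
    copL a (copL b c) = copR a (copR b c) := by
  rw [copL_eq_copR (.inr (fst_copL b c ▸ (one_lt_length_fst_copR hb hc).ne')),
    copR_copL_right]

lemma copR_mem_CDSet {a : List X × ℕ} (ha : a.1 ≠ []) (b : List X × ℕ) :
    copR a b ∈ CDSet :=
  ⟨sortW_ne_nil (List.append_ne_nil_of_left_ne_nil ha b.1), sortW_pairwise _, .inl rfl⟩

lemma copL_mem_CDSet {a : List X × ℕ} (ha : a.1 ≠ []) (b : List X × ℕ) :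
    copL a b ∈ CDSet := by
  by_cases h : a.1.length = 1 ∧ b.1.length = 1
  · refine ⟨fst_copL a b ▸ (copR_mem_CDSet ha b).1, fst_copL a b ▸ sortW_pairwise _,
      .inr ⟨by rw [copL, if_pos h], ?_⟩⟩
    rw [fst_copL, length_fst_copR, h.1, h.2]
  · rw [copL_eq_copR (by tauto)]
    exact copR_mem_CDSet ha b

end products

/-- (D, ⊢, ⊣) is a commutative disemigroup: closed under both
operations, both operations commutative and associative, and the three dialgebra
identities hold. -/
theorem stmt13 :
    (∀ a ∈ CDSet (X := X), ∀ b ∈ CDSet, copL a b ∈ CDSet ∧ copR a b ∈ CDSet) ∧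
    (∀ a ∈ CDSet (X := X), ∀ b ∈ CDSet,
      copL a b = copL b a ∧ copR a b = copR b a) ∧
    (∀ a ∈ CDSet (X := X), ∀ b ∈ CDSet, ∀ c ∈ CDSet,
      copL (copL a b) c = copL a (copL b c) ∧
      copR (copR a b) c = copR a (copR b c) ∧
      copR a (copL b c) = copR a (copR b c) ∧
      copL (copR a b) c = copL (copL a b) c ∧
      copL a (copR b c) = copR (copL a b) c) := by
  refine ⟨fun a ha b _ => ⟨copL_mem_CDSet ha.1 b, copR_mem_CDSet ha.1 b⟩,
    fun a _ b _ => ⟨copL_comm a b, copR_comm a b⟩, fun a ha b hb c hc => ?_⟩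
  refine ⟨?_, copR_assoc a b c, copR_copL_right a b c, ?_, ?_⟩
  · rw [copL_copL_left ha.1 hb.1, copL_copL_right a hb.1 hc.1, copR_assoc]
  · rw [copL_copR_left ha.1 hb.1, copL_copL_left ha.1 hb.1]
  · rw [copL_copR_right a hb.1 hc.1, copR_copL_left, copR_assoc]
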